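/- For the sequence μ constructed in the paper one has liminf_{k→∞} μ_{4k}/μ_k ≥ 2^{1/4} > 1, and for every integer ℓ ≥ 2 one has liminf_{j→∞} μ_{ℓ j}/μ_j ≤ ℓ^β with β := 1/2 + (1/2)·log 2/log 3 < 1; in particular the growth index satisfies γ(M) ≤ β < 1. -/

import Mathlib

open Filter

/-- A weight function: non-decreasing on `[0,∞)`, non-negative, tending to `+∞`. -/
def IsWeight (ω : ℝ → ℝ) : Prop :=
  (∀ t, 0 ≤ ω t) ∧ MonotoneOn ω (Set.Ici (0 : ℝ)) ∧ Tendsto ω atTop atTop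

/-- Property `P(ω,γ)`: there is `K > 1` with `limsup_{t→∞} ω(K^γ t)/ω(t) < K`. -/
def PropP (ω : ℝ → ℝ) (γ : ℝ) : Prop :=
  ∃ K : ℝ, 1 < K ∧ limsup (fun t => ω (K ^ γ * t) / ω t) atTop < K

/-- The growth index `γ(ω) = sup {γ > 0 : P(ω,γ)} ∈ [0,∞]` (`0` if the set is empty). -/
noncomputable def gammaIdx (ω : ℝ → ℝ) : ENNReal :=
  ⨆ γ ∈ {γ : ℝ | 0 < γ ∧ PropP ω γ}, ENNReal.ofReal γ

/-- Growth index of a quotient sequence: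
`γ(M) = sup {γ > 0 : ∃ ℓ ≥ 2, liminf_j μ_{ℓj}/μ_j > ℓ^γ}`. -/
noncomputable def seqGammaIdx (μ : ℕ → ℝ) : ENNReal :=
  ⨆ γ ∈ {γ : ℝ | 0 < γ ∧ ∃ ℓ : ℕ, 2 ≤ ℓ ∧
      (ℓ : ℝ) ^ γ < liminf (fun j : ℕ => μ (ℓ * j) / μ j) atTop},
    ENNReal.ofReal γ

/-!
On `[1, ∞)` every step multiplies `μ` by a factor `≥ 1`, so `μ` is positive and non-decreasing.
Doubling the index multiplies `μ` by `A` inside an `A`-block `(a j, b j]` and by exactly `√2`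
inside a geometric block `(b j, a (j + 1)]`. Only a doubling across some `b j` can give a ratio
near `1`, and the following doubling then stays in a geometric block (or enters the next
`A`-block), so `μ (4k) ≥ √2 μ k`. Along `k = b j` one has `μ (2^i b j) = √2^i μ (b j)`, so for
`2^n < ℓ ≤ 2^(n+1)` monotonicity gives `μ (ℓ b j) ≤ √2^(n+1) μ (b j) ≤ ℓ^β μ (b j)`: the last
step is `2^(n+1) < 2ℓ ≤ ℓ · ℓ^(log 2 / log 3)` for `ℓ ≥ 3`.
-/

open Filter Real

lemma exists_two_pow_mul_lt_le {x k : ℕ} (n : ℕ) (hk : x < k) (hkn : k ≤ 2 ^ n * x) :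
    ∃ i < n, 2 ^ i * x < k ∧ k ≤ 2 ^ (i + 1) * x := by
  induction n with
  | zero => rw [pow_zero, one_mul] at hkn; omega
  | succ n ih =>
    by_cases h : k ≤ 2 ^ n * x
    · obtain ⟨i, hi, hik⟩ := ih h
      exact ⟨i, by omega, hik⟩
    · exact ⟨n, by omega, by omega, hkn⟩

def GeomStepsOn (f : ℕ → ℝ) (c : ℝ) (L : ℕ) : Prop :=
  ∀ k, L < k → k ≤ 2 * L → f k = c ^ ((1 : ℝ) / (2 * L)) * f (k - 1)

namespace GeomStepsOn

variable {f : ℕ → ℝ} {c : ℝ} {L : ℕ}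

lemma eq_rpow_mul (hf : GeomStepsOn f c L) (hc : 0 < c) {m : ℕ} (hm : m ≤ L) :
    f (L + m) = c ^ ((m : ℝ) / (2 * L)) * f L := by
  induction m with
  | zero => simp
  | succ m ih =>
    rw [← add_assoc, hf _ (by omega) (by omega), Nat.add_sub_cancel, ih (by omega), ← mul_assoc,
      ← rpow_add hc, ← add_div]
    push_cast
    ring_nf

lemma two_mul_eq_sqrt_mul (hf : GeomStepsOn f c L) (hc : 0 < c) (hL : 0 < L) :
    f (2 * L) = √c * f L := by
  rw [two_mul, hf.eq_rpow_mul hc le_rfl, sqrt_eq_rpow]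
  congr 2
  field_simp

lemma two_mul_add_eq_sqrt_mul (hf : GeomStepsOn f c L) (hf₂ : GeomStepsOn f c (2 * L))
    (hc : 0 < c) (hL : 0 < L) {m : ℕ} (hm : m ≤ L) :
    f (2 * (L + m)) = √c * f (L + m) := by
  rw [mul_add, hf₂.eq_rpow_mul hc (by omega), hf.two_mul_eq_sqrt_mul hc hL,
    hf.eq_rpow_mul hc hm, mul_left_comm]
  congr 2
  push_cast
  field_simp

end GeomStepsOn

lemma sqrt_two_pow_succ_le_rpow {ℓ n : ℕ} (hℓ : 2 ≤ ℓ) (hn : 2 ^ n < ℓ) :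
    √2 ^ (n + 1) ≤ (ℓ : ℝ) ^ (1/2 + 1/2 * (log 2 / log 3)) := by
  have hlog2 : 0 < log 2 := log_pos (by norm_num)
  have hlog3 : 0 < log 3 := log_pos (by norm_num)
  have hnℓ : n * log 2 < log ℓ := by
    rw [← log_pow]
    exact log_lt_log (by positivity) (by exact_mod_cast hn)
  rw [le_rpow_iff_log_le (by positivity) (by positivity), log_pow, log_sqrt zero_le_two]
  push_cast
  rcases (show ℓ = 2 ∨ 3 ≤ ℓ by omega) with rfl | hℓ3
  · have hn0 : n = 0 := by
      by_contra hn0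
      have := Nat.pow_le_pow_right two_pos (Nat.one_le_iff_ne_zero.2 hn0)
      omega
    subst hn0
    have : 0 < log 2 / log 3 * log 2 := by positivity
    push_cast
    nlinarith
  · have h3 : log 2 ≤ log 2 / log 3 * log ℓ := by
      rw [div_mul_eq_mul_div, le_div_iff₀ hlog3]
      exact mul_le_mul_of_nonneg_left (log_le_log (by norm_num) (by exact_mod_cast hℓ3)) hlog2.le
    nlinarith

lemma half_add_half_log_two_div_log_three_lt_one : 1/2 + 1/2 * (log 2 / log 3) < 1 := by
  have : log 2 / log 3 < 1 :=
    (div_lt_one (log_pos (by norm_num))).2 (log_lt_log (by norm_num) (by norm_num))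
  linarith

lemma seqGammaIdx_le_of_liminf_le {μ : ℕ → ℝ} {β : ℝ}
    (h : ∀ ℓ : ℕ, 2 ≤ ℓ → liminf (fun j : ℕ => μ (ℓ * j) / μ j) atTop ≤ (ℓ : ℝ) ^ β) :
    seqGammaIdx μ ≤ ENNReal.ofReal β := by
  refine iSup₂_le fun γ ⟨_, ℓ, hℓ, hlt⟩ => ENNReal.ofReal_le_ofReal ?_
  have hℓ1 : (1 : ℝ) < ℓ := by exact_mod_cast hℓ
  exact ((rpow_lt_rpow_left_iff hℓ1).1 (hlt.trans_le (h ℓ hℓ))).le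

/-- The construction of `μ`: `A`-blocks `(a j, b j]` followed by geometric blocks
`(b j, a (j + 1)]`. -/
structure IsBlockSeq (A : ℝ) (a b d : ℕ → ℕ) (μ : ℕ → ℝ) : Prop where
  two_lt_A : 2 < A
  one_le_d : ∀ j ≥ 1, 1 ≤ d j
  a_one : a 1 = 1
  b_eq : ∀ j ≥ 1, b j = 2 ^ (d j) * a j
  a_succ : ∀ j ≥ 1, a (j + 1) = 2 ^ j * b j
  mu_a_one : μ (a 1) = 2
  block1 : ∀ j ≥ 1, ∀ i < d j, ∀ k, 2 ^ i * a j < k → k ≤ 2 ^ (i + 1) * a j →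
    μ k = A ^ (i + 1) * μ (a j)
  block2 : ∀ j ≥ 1, ∀ i < j, ∀ k, 2 ^ i * b j < k → k ≤ 2 ^ (i + 1) * b j →
    μ k = (2 : ℝ) ^ ((1 : ℝ) / (2 * 2 ^ i * (b j : ℝ))) * μ (k - 1)

namespace IsBlockSeq

variable {A : ℝ} {a b d : ℕ → ℕ} {μ : ℕ → ℝ}

lemma a_pos (h : IsBlockSeq A a b d μ) {j : ℕ} (hj : 1 ≤ j) : 0 < a j := by
  induction j, hj using Nat.le_induction with
  | base => simp [h.a_one]
  | succ j hj ih => rw [h.a_succ j hj, h.b_eq j hj]; positivity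

lemma a_lt_b (h : IsBlockSeq A a b d μ) {j : ℕ} (hj : 1 ≤ j) : a j < b j := by
  have := h.a_pos hj
  rw [h.b_eq j hj]
  calc a j < 2 * a j := by omega
    _ ≤ 2 ^ d j * a j :=
      Nat.mul_le_mul_right _ (Nat.le_self_pow (by have := h.one_le_d j hj; omega) 2)

lemma a_lt_a_succ (h : IsBlockSeq A a b d μ) {j : ℕ} (hj : 1 ≤ j) : a j < a (j + 1) := by
  rw [h.a_succ j hj]
  exact (h.a_lt_b hj).trans_le (Nat.le_mul_of_pos_left _ (by positivity))

lemma le_b (h : IsBlockSeq A a b d μ) {j : ℕ} (hj : 1 ≤ j) : j ≤ b j := by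
  suffices j ≤ a j from this.trans (h.a_lt_b hj).le
  induction j, hj using Nat.le_induction with
  | base => simp [h.a_one]
  | succ j hj ih => have := h.a_lt_a_succ hj; omega

lemma b_pos (h : IsBlockSeq A a b d μ) {j : ℕ} (hj : 1 ≤ j) : 0 < b j :=
  (h.a_pos hj).trans (h.a_lt_b hj)

lemma tendsto_b (h : IsBlockSeq A a b d μ) : Tendsto b atTop atTop :=
  tendsto_atTop_mono' _ ((eventually_ge_atTop 1).mono fun _ hj => h.le_b hj) tendsto_id

lemma exists_a_lt_le_a_succ (h : IsBlockSeq A a b d μ) {k : ℕ} (hk : 2 ≤ k) :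
    ∃ j ≥ 1, a j < k ∧ k ≤ a (j + 1) := by
  induction k, hk using Nat.le_induction with
  | base =>
    have := h.a_lt_a_succ le_rfl
    rw [h.a_one] at this
    exact ⟨1, le_rfl, by rw [h.a_one]; omega, by omega⟩
  | succ k hk ih =>
    obtain ⟨j, hj, hjk, hkj⟩ := ih
    by_cases hk' : k + 1 ≤ a (j + 1)
    · exact ⟨j, hj, by omega, hk'⟩
    · have := h.a_lt_a_succ (j := j + 1) (by omega)
      exact ⟨j + 1, by omega, by omega, by omega⟩

lemma exists_piece (h : IsBlockSeq A a b d μ) {k : ℕ} (hk : 2 ≤ k) :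
    ∃ j ≥ 1, (∃ i < d j, 2 ^ i * a j < k ∧ k ≤ 2 ^ (i + 1) * a j) ∨
      (∃ i < j, 2 ^ i * b j < k ∧ k ≤ 2 ^ (i + 1) * b j) := by
  obtain ⟨j, hj, hjk, hkj⟩ := h.exists_a_lt_le_a_succ hk
  refine ⟨j, hj, ?_⟩
  by_cases hkb : k ≤ b j
  · exact .inl (exists_two_pow_mul_lt_le _ hjk (h.b_eq j hj ▸ hkb))
  · exact .inr (exists_two_pow_mul_lt_le _ (by omega) (h.a_succ j hj ▸ hkj))

lemma geomStepsOn (h : IsBlockSeq A a b d μ) {i j : ℕ} (hj : 1 ≤ j) (hi : i < j) :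
    GeomStepsOn μ 2 (2 ^ i * b j) := fun k hk hk' => by
  rw [h.block2 j hj i hi k hk (by rwa [pow_succ, mul_comm _ 2, mul_assoc])]
  push_cast
  ring_nf

lemma exists_one_le_mu_succ_eq (h : IsBlockSeq A a b d μ) {k : ℕ} (hk : 1 ≤ k) :
    ∃ c ≥ 1, μ (k + 1) = c * μ k := by
  obtain ⟨j, hj, ⟨i, hi, hlt, hle⟩ | ⟨i, hi, hlt, hle⟩⟩ := h.exists_piece (k := k + 1) (by omega)
  · rw [h.block1 j hj i hi _ hlt hle]
    rcases (show 2 ^ i * a j < k ∨ k = 2 ^ i * a j by omega) with hk' | rfl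
    · exact ⟨1, le_rfl, by rw [h.block1 j hj i hi k hk' (by omega), one_mul]⟩
    refine ⟨A, by linarith [h.two_lt_A], ?_⟩
    cases i with
    | zero => simp
    | succ i =>
      have : 2 ^ i * a j < 2 ^ (i + 1) * a j :=
        Nat.mul_lt_mul_of_pos_right (Nat.pow_lt_pow_succ one_lt_two) (h.a_pos hj)
      rw [h.block1 j hj i (by omega) _ this le_rfl]
      ring
  · rw [h.block2 j hj i hi _ hlt hle, Nat.add_sub_cancel]
    exact ⟨_, one_le_rpow one_le_two (by positivity), rfl⟩

lemma two_le_mu (h : IsBlockSeq A a b d μ) {k : ℕ} (hk : 1 ≤ k) : 2 ≤ μ k := by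
  induction k, hk using Nat.le_induction with
  | base => simpa [h.a_one] using h.mu_a_one.ge
  | succ k hk ih =>
    obtain ⟨c, hc, hμ⟩ := h.exists_one_le_mu_succ_eq hk
    rw [hμ]
    nlinarith

lemma mu_pos (h : IsBlockSeq A a b d μ) {k : ℕ} (hk : 1 ≤ k) : 0 < μ k := by
  linarith [h.two_le_mu hk]

lemma mu_mono (h : IsBlockSeq A a b d μ) {m k : ℕ} (hm : 1 ≤ m) (hmk : m ≤ k) : μ m ≤ μ k := by
  refine monotoneOn_nat_Ici_of_le_succ (fun n hn => ?_) hm (hm.trans hmk : 1 ≤ k) hmk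
  obtain ⟨c, hc, hμ⟩ := h.exists_one_le_mu_succ_eq hn
  exact hμ ▸ le_mul_of_one_le_left (h.mu_pos hn).le hc

lemma mu_two_pow_mul_b (h : IsBlockSeq A a b d μ) {i j : ℕ} (hj : 1 ≤ j) (hi : i ≤ j) :
    μ (2 ^ i * b j) = √2 ^ i * μ (b j) := by
  induction i with
  | zero => simp
  | succ i ih =>
    have hL : 0 < 2 ^ i * b j := Nat.mul_pos (by positivity) (h.b_pos hj)
    rw [pow_succ, mul_comm _ 2, mul_assoc, (h.geomStepsOn hj hi).two_mul_eq_sqrt_mul two_pos hL,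
      ih (by omega), pow_succ]
    ring

lemma mu_two_mul_of_block1 (h : IsBlockSeq A a b d μ) {i j k : ℕ} (hj : 1 ≤ j) (hi : i + 1 < d j)
    (hlt : 2 ^ i * a j < k) (hle : k ≤ 2 ^ (i + 1) * a j) : μ (2 * k) = A * μ k := by
  have hpow : 2 ^ (i + 1) * a j = 2 * (2 ^ i * a j) := by ring
  have hpow' : 2 ^ (i + 1 + 1) * a j = 2 * (2 ^ (i + 1) * a j) := by ring
  rw [h.block1 j hj (i + 1) hi (2 * k) (by omega) (by omega), h.block1 j hj i (by omega) k hlt hle]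
  ring

lemma mu_two_mul_of_block2 (h : IsBlockSeq A a b d μ) {i j k : ℕ} (hj : 1 ≤ j) (hi : i + 1 < j)
    (hlt : 2 ^ i * b j ≤ k) (hle : k ≤ 2 ^ (i + 1) * b j) : μ (2 * k) = √2 * μ k := by
  have hL : 0 < 2 ^ i * b j := Nat.mul_pos (by positivity) (h.b_pos hj)
  have hf₂ := h.geomStepsOn hj hi
  rw [pow_succ, mul_comm _ 2, mul_assoc] at hf₂ hle
  obtain ⟨m, rfl⟩ : ∃ m, k = 2 ^ i * b j + m := ⟨k - 2 ^ i * b j, by omega⟩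
  exact (h.geomStepsOn hj (by omega)).two_mul_add_eq_sqrt_mul hf₂ two_pos hL (by omega)

lemma A_mul_le_mu_two_mul (h : IsBlockSeq A a b d μ) {j k : ℕ} (hj : 1 ≤ j) (hk : k ≤ a j)
    (hk' : a j < 2 * k) : A * μ k ≤ μ (2 * k) := by
  rw [h.block1 j hj 0 (h.one_le_d j hj) (2 * k) (by simpa using hk') (by simpa using hk), pow_one]
  exact mul_le_mul_of_nonneg_left (h.mu_mono (by omega) hk) (by linarith [h.two_lt_A])

lemma sqrt_two_le_A (h : IsBlockSeq A a b d μ) : √2 ≤ A := by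
  have : √2 < 2 := by rw [sqrt_lt' two_pos]; norm_num
  linarith [h.two_lt_A]

lemma sqrt_two_mul_le_mu_two_mul (h : IsBlockSeq A a b d μ) {k : ℕ} (hk : 1 ≤ k)
    (hb : ∀ j ≥ 1, b j < k ∨ 2 * k ≤ b j) : √2 * μ k ≤ μ (2 * k) := by
  have hA : √2 * μ k ≤ A * μ k := mul_le_mul_of_nonneg_right h.sqrt_two_le_A (h.mu_pos hk).le
  rcases (show k = 1 ∨ 2 ≤ k by omega) with rfl | hk2
  · exact hA.trans (h.A_mul_le_mu_two_mul le_rfl (by simp [h.a_one]) (by simp [h.a_one]))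
  obtain ⟨j, hj, ⟨i, hi, hlt, hle⟩ | ⟨i, hi, hlt, hle⟩⟩ := h.exists_piece hk2
  · rcases (show i + 1 < d j ∨ i + 1 = d j by omega) with hi' | hi'
    · exact h.mu_two_mul_of_block1 hj hi' hlt hle ▸ hA
    · have hbj : b j = 2 ^ (i + 1) * a j := by rw [h.b_eq j hj, ← hi']
      have hpow : 2 ^ (i + 1) * a j = 2 * (2 ^ i * a j) := by ring
      have := hb j hj
      omega
  · rcases (show i + 1 < j ∨ i + 1 = j by omega) with hi' | rfl
    · exact (h.mu_two_mul_of_block2 hj hi' hlt.le hle).ge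
    · rw [← h.a_succ _ hj] at hle
      have : a (i + 1 + 1) < 2 * k := by rw [h.a_succ _ hj, pow_succ]; nlinarith
      exact hA.trans (h.A_mul_le_mu_two_mul (by omega) hle this)

lemma sqrt_two_mul_le_mu_four_mul (h : IsBlockSeq A a b d μ) {k : ℕ} (hk : 1 ≤ k) :
    √2 * μ k ≤ μ (4 * k) := by
  by_cases hb : ∀ j ≥ 1, b j < k ∨ 2 * k ≤ b j
  · exact (h.sqrt_two_mul_le_mu_two_mul hk hb).trans (h.mu_mono (by omega) (by omega))
  push Not at hb
  obtain ⟨j, hj, hkb, hbk⟩ := hb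
  have hμ : √2 * μ k ≤ √2 * μ (2 * k) :=
    mul_le_mul_of_nonneg_left (h.mu_mono hk (by omega)) (sqrt_nonneg 2)
  rw [show 4 * k = 2 * (2 * k) by ring]
  rcases (show j = 1 ∨ 2 ≤ j by omega) with rfl | hj2
  · have ha2 : a 2 = 2 * b 1 := by simpa using h.a_succ 1 le_rfl
    calc √2 * μ k ≤ √2 * μ (2 * k) := hμ
      _ ≤ A * μ (2 * k) := mul_le_mul_of_nonneg_right h.sqrt_two_le_A (h.mu_pos (by omega)).le
      _ ≤ μ (2 * (2 * k)) := h.A_mul_le_mu_two_mul (j := 2) (by omega) (by omega) (by omega)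
  · exact hμ.trans (h.mu_two_mul_of_block2 hj (i := 0) (by omega) (by rw [pow_zero, one_mul]; omega)
      (by rw [zero_add, pow_one]; omega)).ge

lemma frequently_mu_mul_div_le (h : IsBlockSeq A a b d μ) {ℓ : ℕ} (hℓ : 2 ≤ ℓ) :
    ∃ᶠ k in atTop, μ (ℓ * k) / μ k ≤ (ℓ : ℝ) ^ (1/2 + 1/2 * (log 2 / log 3)) := by
  set n := Nat.clog 2 ℓ - 1
  have hn : 2 ^ n < ℓ := Nat.pow_pred_clog_lt_self one_lt_two hℓ
  have hℓn : ℓ ≤ 2 ^ (n + 1) := by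
    rw [Nat.sub_add_cancel (Nat.clog_pos one_lt_two hℓ)]
    exact Nat.le_pow_clog one_lt_two ℓ
  refine h.tendsto_b.frequently (Eventually.frequently ?_)
  filter_upwards [eventually_ge_atTop (n + 1)] with j hj
  have hb := h.b_pos (j := j) (by omega)
  rw [div_le_iff₀ (h.mu_pos hb)]
  calc μ (ℓ * b j) ≤ μ (2 ^ (n + 1) * b j) :=
        h.mu_mono (Nat.mul_pos (by omega) hb) (Nat.mul_le_mul_right _ hℓn)
    _ = √2 ^ (n + 1) * μ (b j) := h.mu_two_pow_mul_b (by omega) hj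
    _ ≤ _ := mul_le_mul_of_nonneg_right (sqrt_two_pow_succ_le_rpow hℓ hn) (h.mu_pos hb).le

lemma liminf_mu_mul_div_le (h : IsBlockSeq A a b d μ) {ℓ : ℕ} (hℓ : 2 ≤ ℓ) :
    liminf (fun k : ℕ => μ (ℓ * k) / μ k) atTop ≤ (ℓ : ℝ) ^ (1/2 + 1/2 * (log 2 / log 3)) :=
  liminf_le_of_frequently_le (h.frequently_mu_mul_div_le hℓ) <|
    isBoundedUnder_of_eventually_ge <| (eventually_ge_atTop 1).mono fun k hk =>
      (div_pos (h.mu_pos (Nat.mul_pos (by omega) hk)) (h.mu_pos hk)).le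

lemma rpow_le_liminf_mu_four_mul_div (h : IsBlockSeq A a b d μ) :
    (2 : ℝ) ^ ((1 : ℝ) / 4) ≤ liminf (fun k : ℕ => μ (4 * k) / μ k) atTop := by
  refine le_liminf_of_le (IsCoboundedUnder.of_frequently_le
    (h.frequently_mu_mul_div_le (ℓ := 4) (by norm_num))) ?_
  filter_upwards [eventually_ge_atTop 1] with k hk
  rw [le_div_iff₀ (h.mu_pos hk)]
  have : (2 : ℝ) ^ ((1 : ℝ) / 4) ≤ √2 := by
    rw [sqrt_eq_rpow]
    exact rpow_le_rpow_of_exponent_le one_le_two (by norm_num)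
  exact (mul_le_mul_of_nonneg_right this (h.mu_pos hk).le).trans (h.sqrt_two_mul_le_mu_four_mul hk)

end IsBlockSeq

theorem mu_index_estimates_general
(A : ℝ) (hA : 2 < A)
    (a b d : ℕ → ℕ) (μ : ℕ → ℝ)
    (hd : StrictMonoOn d (Set.Ici 1)) (hd1 : 1 ≤ d 1)
    (ha1 : a 1 = 1)
    (hb : ∀ j ≥ 1, b j = 2 ^ (d j) * a j)
    (ha : ∀ j ≥ 1, a (j + 1) = 2 ^ j * b j)
    (hμa1 : μ (a 1) = 2)
    (hblock1 : ∀ j ≥ 1, ∀ i < d j, ∀ k, 2 ^ i * a j < k → k ≤ 2 ^ (i + 1) * a j →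
      μ k = A ^ (i + 1) * μ (a j))
    (hblock2 : ∀ j ≥ 1, ∀ i < j, ∀ k, 2 ^ i * b j < k → k ≤ 2 ^ (i + 1) * b j →
      μ k = (2 : ℝ) ^ ((1 : ℝ) / (2 * 2 ^ i * (b j : ℝ))) * μ (k - 1)) :
    ((2 : ℝ) ^ ((1 : ℝ) / 4) ≤ liminf (fun k : ℕ => μ (4 * k) / μ k) atTop ∧
      1 < (2 : ℝ) ^ ((1 : ℝ) / 4)) ∧
    (∀ ℓ : ℕ, 2 ≤ ℓ →
      liminf (fun j : ℕ => μ (ℓ * j) / μ j) atTop ≤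
        (ℓ : ℝ) ^ (1/2 + 1/2 * (Real.log 2 / Real.log 3))) ∧
    (1/2 + 1/2 * (Real.log 2 / Real.log 3) < 1) ∧
    seqGammaIdx μ ≤ ENNReal.ofReal (1/2 + 1/2 * (Real.log 2 / Real.log 3)) := by
  have one_le_d : ∀ j ≥ 1, 1 ≤ d j := fun j hj => hd1.trans (hd.monotoneOn Set.self_mem_Ici hj hj)
  have h : IsBlockSeq A a b d μ := ⟨hA, one_le_d, ha1, hb, ha, hμa1, hblock1, hblock2⟩
  exact ⟨⟨h.rpow_le_liminf_mu_four_mul_div, one_lt_rpow one_lt_two (by norm_num)⟩,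
    fun ℓ hℓ => h.liminf_mu_mul_div_le hℓ, half_add_half_log_two_div_log_three_lt_one,
    seqGammaIdx_le_of_liminf_le fun ℓ hℓ => h.liminf_mu_mul_div_le hℓ⟩

theorem mu_index_estimates
(A : ℝ) (hA : 2 < A)
    (a b d : ℕ → ℕ) (μ : ℕ → ℝ)
    (hd : StrictMonoOn d (Set.Ici 1)) (hd1 : 1 ≤ d 1)
    (hdgrow : ∀ j ≥ 1, (2 / A) ^ (d j) ≤ 1 / (2 : ℝ) ^ ((j : ℝ) / 2 + 1))
    (ha1 : a 1 = 1)
    (hb : ∀ j ≥ 1, b j = 2 ^ (d j) * a j)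
    (ha : ∀ j ≥ 1, a (j + 1) = 2 ^ j * b j)
    (hμa1 : μ (a 1) = 2)
    (hblock1 : ∀ j ≥ 1, ∀ i < d j, ∀ k, 2 ^ i * a j < k → k ≤ 2 ^ (i + 1) * a j →
      μ k = A ^ (i + 1) * μ (a j))
    (hblock2 : ∀ j ≥ 1, ∀ i < j, ∀ k, 2 ^ i * b j < k → k ≤ 2 ^ (i + 1) * b j →
      μ k = (2 : ℝ) ^ ((1 : ℝ) / (2 * 2 ^ i * (b j : ℝ))) * μ (k - 1)) :
    ((2 : ℝ) ^ ((1 : ℝ) / 4) ≤ liminf (fun k : ℕ => μ (4 * k) / μ k) atTop ∧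
      1 < (2 : ℝ) ^ ((1 : ℝ) / 4)) ∧
    (∀ ℓ : ℕ, 2 ≤ ℓ →
      liminf (fun j : ℕ => μ (ℓ * j) / μ j) atTop ≤
        (ℓ : ℝ) ^ (1/2 + 1/2 * (Real.log 2 / Real.log 3))) ∧
    (1/2 + 1/2 * (Real.log 2 / Real.log 3) < 1) ∧
    seqGammaIdx μ ≤ ENNReal.ofReal (1/2 + 1/2 * (Real.log 2 / Real.log 3)) :=
  mu_index_estimates_general A hA a b d μ hd hd1 ha1 hb ha hμa1 hblock1 hblock2
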